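/- arXiv:2504.20391 — 4 statements merged into one kernel-verified Lean document; each statement's English description precedes it below -/
import Mathlib

section
/- For every r ∈ [1,∞) and every cut-off c > 0, the OSPA trajectory distance satisfies the triangle inequality: for all trajectories u, v, t on the time window 𝕂, d_T^{(c,r)}(u,v) ≤ d_T^{(c,r)}(u,t) + d_T^{(c,r)}(t,v). -/
/-!
Truncating a metric at `c` preserves the triangle inequality, so the per-time costs satisfy
`e_{u,v} ≤ e_{u,t} + e_{t,v}`, and Minkowski's inequality on the window `D_u ∪ D_v` bounds the
`r`-mean of `e_{u,v}` by the sum of the `r`-means of `e_{u,t}` and `e_{t,v}` over that same window.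
It remains to compare the mean of `e_{u,t}` over `D_u ∪ D_v` with `d_T(u,t)`, its mean over
`D_u ∪ D_t`: the two windows differ only by times where `e_{u,t}` vanishes (outside `D_u ∪ D_t`)
or takes its maximal value `c` (outside `D_u ∪ D_v`, hence outside `D_t`), and trading the former
for the latter cannot decrease a mean.
-/

open scoped BigOperators

/-- A trajectory on the time window `{1,…,K}` (modeled as `Fin K`): a domain together
with a state map (values outside the domain are irrelevant). -/
structure Traj (K : ℕ) (X : Type*) where
  dom : Finset (Fin K)
  toFun : Fin K → X

/-- Per-time cost `e_{u,v}(k)` with base metric cut off at `c`. -/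
noncomputable def ecost {K : ℕ} {X : Type*} [MetricSpace X] (c : ℝ) (u v : Traj K X)
    (k : Fin K) : ℝ :=
  if k ∈ u.dom ∩ v.dom then min (dist (u.toFun k) (v.toFun k)) c
  else if k ∈ u.dom ∪ v.dom then c
  else 0

/-- OSPA trajectory distance of order `r` and cut-off `c`. -/
noncomputable def dT {K : ℕ} {X : Type*} [MetricSpace X] (c r : ℝ) (u v : Traj K X) : ℝ :=
  if u.dom ∪ v.dom = ∅ then 0
  else ((∑ k ∈ u.dom ∪ v.dom, ecost c u v k ^ r) / ((u.dom ∪ v.dom).card : ℝ)) ^ (1 / r)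

open Finset

theorem min_add_le_min_add_min {a b c : ℝ} (ha : 0 ≤ a) (hb : 0 ≤ b) (hc : 0 ≤ c) :
    min (a + b) c ≤ min a c + min b c := by
  simp only [min_def]
  split_ifs <;> linarith

theorem sum_div_card_le_sum_div_card_of_sdiff {ι : Type*} [DecidableEq ι] {A B : Finset ι}
    {f : ι → ℝ} {M : ℝ} (hM : 0 ≤ M) (hf : ∀ i ∈ A, 0 ≤ f i ∧ f i ≤ M)
    (hAB : ∀ i ∈ A \ B, f i = 0) (hBA : ∀ i ∈ B \ A, f i = M) :
    (∑ i ∈ A, f i) / #A ≤ (∑ i ∈ B, f i) / #B := by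
  set S := ∑ i ∈ A ∩ B, f i
  have hSA : ∑ i ∈ A, f i = S := by
    rw [← sum_inter_add_sum_sdiff A B, sum_eq_zero hAB, add_zero]
  have hSB : ∑ i ∈ B, f i = S + #(B \ A) * M := by
    rw [← sum_inter_add_sum_sdiff B A, inter_comm, sum_congr rfl hBA, sum_const, nsmul_eq_mul]
  have hS0 : 0 ≤ S := sum_nonneg fun i hi => (hf i (mem_of_mem_inter_left hi)).1
  have hSM : S ≤ #(A ∩ B) * M := by
    simpa using sum_le_sum fun i hi => (hf i (mem_of_mem_inter_left hi)).2
  have hcardB : (#B : ℝ) = #(A ∩ B) + #(B \ A) := by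
    rw [inter_comm]; exact_mod_cast (card_inter_add_card_sdiff B A).symm
  have hcardA : (#(A ∩ B) : ℝ) ≤ #A := by exact_mod_cast card_le_card inter_subset_left
  rw [hSA, hSB]
  rcases A.eq_empty_or_nonempty with rfl | hA
  · rw [card_empty, Nat.cast_zero, div_zero]
    positivity
  rcases B.eq_empty_or_nonempty with rfl | hB
  · simp [S]
  rw [div_le_div_iff₀ (by simpa using hA) (by simpa using hB), hcardB]
  have hm : (0 : ℝ) ≤ #(B \ A) := Nat.cast_nonneg _
  nlinarith [mul_le_mul_of_nonneg_right hSM hm, mul_le_mul_of_nonneg_left hcardA hS0,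
    mul_le_mul_of_nonneg_right hcardA (mul_nonneg hm hM)]

section
variable {K : ℕ} {X : Type*} [MetricSpace X] {c r : ℝ}

theorem ecost_nonneg (hc : 0 ≤ c) (u v : Traj K X) (k : Fin K) : 0 ≤ ecost c u v k := by
  unfold ecost
  split_ifs
  exacts [le_min dist_nonneg hc, hc, le_rfl]

theorem ecost_le (hc : 0 ≤ c) (u v : Traj K X) (k : Fin K) : ecost c u v k ≤ c := by
  unfold ecost
  split_ifs
  exacts [min_le_right _ _, le_rfl, hc]

theorem ecost_of_notMem_union {u v : Traj K X} {k : Fin K} (hk : k ∉ u.dom ∪ v.dom) :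
    ecost c u v k = 0 := by
  rw [ecost, if_neg (fun h => hk (mem_union_left _ (mem_inter.1 h).1)), if_neg hk]

theorem ecost_of_notMem_inter {u v : Traj K X} {k : Fin K} (hk : k ∈ u.dom ∪ v.dom)
    (hk' : k ∉ u.dom ∩ v.dom) : ecost c u v k = c := by
  rw [ecost, if_neg hk', if_pos hk]

theorem ecost_triangle (hc : 0 ≤ c) (u v t : Traj K X) (k : Fin K) :
    ecost c u v k ≤ ecost c u t k + ecost c t v k := by
  have := ecost_nonneg hc u t k
  have := ecost_nonneg hc t v k
  have := ecost_le hc u v k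
  by_cases hu : k ∈ u.dom <;> by_cases hv : k ∈ v.dom <;> by_cases ht : k ∈ t.dom <;>
    simp only [ecost, mem_inter, mem_union, hu, hv, ht, and_self, and_true, and_false,
      or_self, or_true, true_or, if_true, if_false] at * <;> try linarith
  calc min (dist (u.toFun k) (v.toFun k)) c
      ≤ min (dist (u.toFun k) (t.toFun k) + dist (t.toFun k) (v.toFun k)) c :=
        min_le_min_right c (dist_triangle _ _ _)
    _ ≤ _ := min_add_le_min_add_min dist_nonneg dist_nonneg hc

theorem sum_ecost_rpow_nonneg (hc : 0 ≤ c) (u v : Traj K X) (A : Finset (Fin K)) :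
    0 ≤ ∑ k ∈ A, ecost c u v k ^ r :=
  sum_nonneg fun k _ => Real.rpow_nonneg (ecost_nonneg hc u v k) r

noncomputable def powerMeanCost (c r : ℝ) (u v : Traj K X) (A : Finset (Fin K)) : ℝ :=
  ((∑ k ∈ A, ecost c u v k ^ r) / #A) ^ (1 / r)

theorem dT_eq_powerMeanCost (hr : r ≠ 0) (u v : Traj K X) :
    dT c r u v = powerMeanCost c r u v (u.dom ∪ v.dom) := by
  rw [dT, powerMeanCost]
  split_ifs with h
  · rw [h, sum_empty, zero_div, Real.zero_rpow (one_div_ne_zero hr)]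
  · rfl

theorem powerMeanCost_triangle (hc : 0 ≤ c) (hr : 1 ≤ r) (u v t : Traj K X)
    (A : Finset (Fin K)) :
    powerMeanCost c r u v A ≤ powerMeanCost c r u t A + powerMeanCost c r t v A := by
  simp only [powerMeanCost, ← add_div,
    Real.div_rpow (sum_ecost_rpow_nonneg hc _ _ A) (Nat.cast_nonneg _)]
  gcongr
  calc (∑ k ∈ A, ecost c u v k ^ r) ^ (1 / r)
      ≤ (∑ k ∈ A, (ecost c u t k + ecost c t v k) ^ r) ^ (1 / r) := by
        gcongr with k
        exacts [sum_ecost_rpow_nonneg hc u v A, ecost_nonneg hc u v k, ecost_triangle hc u v t k]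
    _ ≤ _ := Real.Lp_add_le_of_nonneg A hr (fun k _ => ecost_nonneg hc u t k)
        (fun k _ => ecost_nonneg hc t v k)

theorem powerMeanCost_le_dT (hc : 0 ≤ c) (hr : 0 < r) {w z : Traj K X} {A : Finset (Fin K)}
    (hA : w.dom ∩ z.dom ⊆ A) : powerMeanCost c r w z A ≤ dT c r w z := by
  rw [dT_eq_powerMeanCost hr.ne', powerMeanCost, powerMeanCost]
  gcongr ?_ ^ _
  · exact div_nonneg (sum_ecost_rpow_nonneg hc w z A) (Nat.cast_nonneg _)
  refine sum_div_card_le_sum_div_card_of_sdiff (Real.rpow_nonneg hc r)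
    (fun k _ => ⟨Real.rpow_nonneg (ecost_nonneg hc w z k) r,
      Real.rpow_le_rpow (ecost_nonneg hc w z k) (ecost_le hc w z k) hr.le⟩) ?_ ?_
  · intro k hk
    rw [ecost_of_notMem_union (mem_sdiff.1 hk).2, Real.zero_rpow hr.ne']
  · intro k hk
    rw [ecost_of_notMem_inter (mem_sdiff.1 hk).1 fun h => (mem_sdiff.1 hk).2 (hA h)]

end

theorem ospa_trajectory_triangle_general {K : ℕ} {X : Type*} [MetricSpace X]
    {c r : ℝ} (hc : 0 < c) (hr : 1 ≤ r) (u v t : Traj K X) :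
    dT c r u v ≤ dT c r u t + dT c r t v := by
  have hr₀ : 0 < r := zero_lt_one.trans_le hr
  rw [dT_eq_powerMeanCost hr₀.ne']
  exact (powerMeanCost_triangle hc.le hr u v t _).trans (add_le_add
    (powerMeanCost_le_dT hc.le hr₀ (inter_subset_left.trans subset_union_left))
    (powerMeanCost_le_dT hc.le hr₀ (inter_subset_right.trans subset_union_right)))

/-- The OSPA trajectory distance satisfies the triangle inequality for every order
`r ∈ [1, ∞)` and cut-off `c > 0`. -/
theorem ospa_trajectory_triangle {K : ℕ} {X : Type*} [MetricSpace X] (hK : 1 ≤ K)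
    {c r : ℝ} (hc : 0 < c) (hr : 1 ≤ r) (u v t : Traj K X) :
    dT c r u v ≤ dT c r u t + dT c r t v :=
  ospa_trajectory_triangle_general hc hr u v t
end

section
/- Suppose v̂ is an r-th order Fréchet mean of the trajectories v^(1),…,v^(N), i.e., V^(r)(v̂) ≤ V^(r)(u) for every trajectory u on 𝕂. Then for every k ∈ D_{v̂} and every μ ∈ X, Σ_{n : k ∈ D_{v^(n)}} d_X^{(c)}(v̂(k), v^(n)(k))^r / |D_{v̂} ∪ D_{v^(n)}| ≤ Σ_{n : k ∈ D_{v^(n)}} d_X^{(c)}(μ, v^(n)(k))^r / |D_{v̂} ∪ D_{v^(n)}|; that is, v̂(k) is an r-th order Fréchet mean of the sample trajectory states existing at time k, weighted by 1/|D_{v̂} ∪ D_{v^(n)}|. -/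
open scoped BigOperators

/-- Fréchet cost `V^(r)(u) = Σ_{n=1}^N d_T^{(c,r)}(u, v^(n))^r`. -/
noncomputable def frechetCost {K N : ℕ} {X : Type*} [MetricSpace X] (c r : ℝ)
    (v : Fin N → Traj K X) (u : Traj K X) : ℝ :=
  ∑ n, dT c r u (v n) ^ r

/-- If `v̂` is an `r`-th order Fréchet mean of the trajectories `v^(1),…,v^(N)`,
then for every `k ∈ D_{v̂}`, the state `v̂(k)` is an `r`-th order Fréchet mean of the
sample trajectory states existing at time `k`, weighted by `1/|D_{v̂} ∪ D_{v^(n)}|`. -/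
theorem frechet_mean_trajectory_state {K N : ℕ} {X : Type*} [MetricSpace X]
    (hK : 1 ≤ K) (hN : 1 ≤ N) {c r : ℝ} (hc : 0 < c) (hr : 1 ≤ r)
    (v : Fin N → Traj K X) (vhat : Traj K X)
    (hmin : ∀ u : Traj K X, frechetCost c r v vhat ≤ frechetCost c r v u) :
    ∀ k ∈ vhat.dom, ∀ μ : X,
      ∑ n ∈ Finset.univ.filter (fun n => k ∈ (v n).dom),
          (min (dist (vhat.toFun k) ((v n).toFun k)) c) ^ r
            / ((vhat.dom ∪ (v n).dom).card : ℝ)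
        ≤ ∑ n ∈ Finset.univ.filter (fun n => k ∈ (v n).dom),
          (min (dist μ ((v n).toFun k)) c) ^ r
            / ((vhat.dom ∪ (v n).dom).card : ℝ) := by
  intro k hk μ
  classical
  have hrpos : (0:ℝ) < r := lt_of_lt_of_le one_pos hr
  have hr0 : r ≠ 0 := ne_of_gt hrpos
  set u : Traj K X := ⟨vhat.dom, Function.update vhat.toFun k μ⟩ with hu
  have hud : u.dom = vhat.dom := rfl
  have huf : ∀ j, u.toFun j = Function.update vhat.toFun k μ j := fun _ => rfl
  -- `dT ^ r` is the averaged sum, for trajectories with domain `vhat.dom`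
  have key : ∀ w : Traj K X, w.dom = vhat.dom → ∀ n : Fin N,
      dT c r w (v n) ^ r
        = (∑ j ∈ vhat.dom ∪ (v n).dom, ecost c w (v n) j ^ r)
            / ((vhat.dom ∪ (v n).dom).card : ℝ) := by
    intro w hw n
    have hne : vhat.dom ∪ (v n).dom ≠ ∅ := by
      intro h
      have hmem : k ∈ vhat.dom ∪ (v n).dom := Finset.mem_union_left _ hk
      rw [h] at hmem
      exact absurd hmem (Finset.notMem_empty k)
    have hnonneg : 0 ≤ (∑ j ∈ vhat.dom ∪ (v n).dom, ecost c w (v n) j ^ r)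
        / ((vhat.dom ∪ (v n).dom).card : ℝ) := by
      apply div_nonneg
      · apply Finset.sum_nonneg
        intro j hj
        apply Real.rpow_nonneg
        unfold ecost
        split_ifs with h1 h2
        · exact le_min dist_nonneg hc.le
        · exact hc.le
        · exact le_rfl
      · exact Nat.cast_nonneg _
    unfold dT
    rw [hw, if_neg hne, ← Real.rpow_mul hnonneg, one_div_mul_cancel hr0,
      Real.rpow_one]
  -- Fréchet optimality in averaged-sum form
  have hAB :
      ∑ n : Fin N, (∑ j ∈ vhat.dom ∪ (v n).dom, ecost c vhat (v n) j ^ r)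
          / ((vhat.dom ∪ (v n).dom).card : ℝ)
        ≤ ∑ n : Fin N, (∑ j ∈ vhat.dom ∪ (v n).dom, ecost c u (v n) j ^ r)
          / ((vhat.dom ∪ (v n).dom).card : ℝ) := by
    calc ∑ n : Fin N, (∑ j ∈ vhat.dom ∪ (v n).dom, ecost c vhat (v n) j ^ r)
          / ((vhat.dom ∪ (v n).dom).card : ℝ)
        = frechetCost c r v vhat :=
          (Finset.sum_congr rfl fun n _ => (key vhat rfl n)).symm
      _ ≤ frechetCost c r v u := hmin u
      _ = _ := Finset.sum_congr rfl fun n _ => key u rfl n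
  -- the sums differ only at time `k`
  have hdiff : ∀ n : Fin N,
      (∑ j ∈ vhat.dom ∪ (v n).dom, ecost c vhat (v n) j ^ r)
        - (∑ j ∈ vhat.dom ∪ (v n).dom, ecost c u (v n) j ^ r)
      = ecost c vhat (v n) k ^ r - ecost c u (v n) k ^ r := by
    intro n
    have hkU : k ∈ vhat.dom ∪ (v n).dom := Finset.mem_union_left _ hk
    rw [← Finset.add_sum_erase _ _ hkU, ← Finset.add_sum_erase _ _ hkU]
    have hrest : ∑ j ∈ (vhat.dom ∪ (v n).dom).erase k, ecost c vhat (v n) j ^ r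
        = ∑ j ∈ (vhat.dom ∪ (v n).dom).erase k, ecost c u (v n) j ^ r := by
      apply Finset.sum_congr rfl
      intro j hj
      have hjk : j ≠ k := Finset.ne_of_mem_erase hj
      have he : ecost c vhat (v n) j = ecost c u (v n) j := by
        unfold ecost
        rw [hud, huf, Function.update_of_ne hjk]
      rw [he]
    rw [hrest]; ring
  -- value of the difference at time `k`
  have hval : ∀ n : Fin N,
      ecost c vhat (v n) k ^ r - ecost c u (v n) k ^ r
      = if k ∈ (v n).dom then
          (min (dist (vhat.toFun k) ((v n).toFun k)) c) ^ r
            - (min (dist μ ((v n).toFun k)) c) ^ r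
        else 0 := by
    intro n
    by_cases h : k ∈ (v n).dom
    · rw [if_pos h]
      have h1 : ecost c vhat (v n) k = min (dist (vhat.toFun k) ((v n).toFun k)) c := by
        unfold ecost
        rw [if_pos (Finset.mem_inter.mpr ⟨hk, h⟩)]
      have h2 : ecost c u (v n) k = min (dist μ ((v n).toFun k)) c := by
        unfold ecost
        rw [hud, if_pos (Finset.mem_inter.mpr ⟨hk, h⟩), huf, Function.update_self]
      rw [h1, h2]
    · rw [if_neg h]
      have h1 : ecost c vhat (v n) k = c := by
        unfold ecost
        rw [if_neg (by simp [Finset.mem_inter, h]),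
          if_pos (Finset.mem_union_left _ hk)]
      have h2 : ecost c u (v n) k = c := by
        unfold ecost
        rw [hud, if_neg (by simp [Finset.mem_inter, h]),
          if_pos (Finset.mem_union_left _ hk)]
      rw [h1, h2]; ring
  -- assemble
  rw [← sub_nonpos, ← Finset.sum_sub_distrib, Finset.sum_filter]
  have heq : ∀ n : Fin N,
      (if k ∈ (v n).dom then
          (min (dist (vhat.toFun k) ((v n).toFun k)) c) ^ r
              / ((vhat.dom ∪ (v n).dom).card : ℝ)
            - (min (dist μ ((v n).toFun k)) c) ^ r
              / ((vhat.dom ∪ (v n).dom).card : ℝ)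
        else 0)
      = (∑ j ∈ vhat.dom ∪ (v n).dom, ecost c vhat (v n) j ^ r)
            / ((vhat.dom ∪ (v n).dom).card : ℝ)
        - (∑ j ∈ vhat.dom ∪ (v n).dom, ecost c u (v n) j ^ r)
            / ((vhat.dom ∪ (v n).dom).card : ℝ) := by
    intro n
    symm
    rw [← sub_div, hdiff n, hval n]
    by_cases h : k ∈ (v n).dom
    · rw [if_pos h, if_pos h, sub_div]
    · rw [if_neg h, if_neg h, zero_div]
  rw [Finset.sum_congr rfl (fun n _ => heq n), Finset.sum_sub_distrib, sub_nonpos]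
  exact hAB
end

section
/- If (γ̂, x̂) minimizes U^(r) over {0,1}^K × X^K, then the trajectory v̂ with domain D_{γ̂} and states v̂(k) = x̂_k for k ∈ D_{γ̂} is an r-th order Fréchet mean of v^(1),…,v^(N): V^(r)(v̂) ≤ V^(r)(u) for every trajectory u on 𝕂. -/
open scoped BigOperators

/-- Domain `D_γ = {k : γ_k = 1}` of an existence history `γ ∈ {0,1}^K`. -/
def Dgam {K : ℕ} (γ : Fin K → Bool) : Finset (Fin K) :=
  Finset.univ.filter (fun k => γ k = true)

/-- `ψ_k^{(r)}(γ, x_k)` (a summand with `|D_γ ∪ D_{v^(n)}| = 0` equals `0`, which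
is automatic from the division-by-zero convention). -/
noncomputable def psiK {K N : ℕ} {X : Type*} [MetricSpace X] (c r : ℝ)
    (v : Fin N → Traj K X) (γ : Fin K → Bool) (k : Fin K) (xk : X) : ℝ :=
  ∑ n, ((if k ∈ (v n).dom then (min (dist xk ((v n).toFun k)) c) ^ r else 0)
        + (if k ∉ (v n).dom then c ^ r else 0))
      / ((Dgam γ ∪ (v n).dom).card : ℝ)

/-- `ψ̄_k^{(r)}(γ)`. -/
noncomputable def psiBarK {K N : ℕ} {X : Type*} [MetricSpace X] (c r : ℝ)
    (v : Fin N → Traj K X) (γ : Fin K → Bool) (k : Fin K) : ℝ :=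
  ∑ n, (if k ∈ (v n).dom then c ^ r else 0) / ((Dgam γ ∪ (v n).dom).card : ℝ)

/-- `U^(r)(γ, x) = Σ_k [γ_k ψ_k^{(r)}(γ, x_k) + (1 − γ_k) ψ̄_k^{(r)}(γ)]`. -/
noncomputable def Ucost {K N : ℕ} {X : Type*} [MetricSpace X] (c r : ℝ)
    (v : Fin N → Traj K X) (γ : Fin K → Bool) (x : Fin K → X) : ℝ :=
  ∑ k, if γ k then psiK c r v γ k (x k) else psiBarK c r v γ k

lemma frechetCost_eq_Ucost {K N : ℕ} {X : Type*} [MetricSpace X]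
    {c r : ℝ} (hc : 0 < c) (hr : 1 ≤ r)
    (v : Fin N → Traj K X) (γ : Fin K → Bool) (x : Fin K → X) :
    frechetCost c r v ⟨Dgam γ, x⟩ = Ucost c r v γ x := by
  have hr0 : r ≠ 0 := by positivity
  set u : Traj K X := ⟨Dgam γ, x⟩ with hu
  have hg : ∀ n k, ecost c u (v n) k ^ r
      = (if γ k then (if k ∈ (v n).dom then (min (dist (x k) ((v n).toFun k)) c) ^ r else c ^ r)
         else (if k ∈ (v n).dom then c ^ r else 0)) := by
    intro n k
    by_cases hγ : γ k = true <;> by_cases hd : k ∈ (v n).dom <;>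
      simp [ecost, hu, Dgam, hγ, hd, Finset.mem_inter, Finset.mem_union, Finset.mem_filter,
        Real.zero_rpow hr0]
  have hstep : ∀ n, dT c r u (v n) ^ r
      = (∑ k, ecost c u (v n) k ^ r) / ((u.dom ∪ (v n).dom).card : ℝ) := by
    intro n
    have hsum : ∑ k ∈ u.dom ∪ (v n).dom, ecost c u (v n) k ^ r
        = ∑ k, ecost c u (v n) k ^ r := by
      apply Finset.sum_subset (Finset.subset_univ _)
      intro k _ hk
      have : ecost c u (v n) k = 0 := by
        simp only [ecost]
        rw [if_neg, if_neg hk]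
        intro hmem
        exact hk (Finset.mem_union.mpr (Or.inl (Finset.mem_inter.mp hmem).1))
      rw [this, Real.zero_rpow hr0]
    by_cases hemp : u.dom ∪ (v n).dom = ∅
    · rw [dT, if_pos hemp, Real.zero_rpow hr0, ← hsum, hemp]
      simp
    · rw [dT, if_neg hemp]
      have hnn : 0 ≤ (∑ k ∈ u.dom ∪ (v n).dom, ecost c u (v n) k ^ r)
          / ((u.dom ∪ (v n).dom).card : ℝ) := by
        apply div_nonneg _ (Nat.cast_nonneg _)
        apply Finset.sum_nonneg
        intro k _
        apply Real.rpow_nonneg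
        simp only [ecost]
        split_ifs <;>
          first
          | exact le_min dist_nonneg hc.le
          | exact hc.le
          | exact le_rfl
      rw [← Real.rpow_mul hnn, one_div_mul_cancel hr0, Real.rpow_one, hsum]
  calc frechetCost c r v u
      = ∑ n, (∑ k, ecost c u (v n) k ^ r) / ((u.dom ∪ (v n).dom).card : ℝ) := by
        simp only [frechetCost]
        exact Finset.sum_congr rfl fun n _ => hstep n
    _ = ∑ k, ∑ n, ecost c u (v n) k ^ r / ((Dgam γ ∪ (v n).dom).card : ℝ) := by
        rw [Finset.sum_comm]
        exact Finset.sum_congr rfl fun n _ => Finset.sum_div _ _ _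
    _ = Ucost c r v γ x := by
        unfold Ucost psiK psiBarK
        refine Finset.sum_congr rfl fun k _ => ?_
        by_cases hγ : γ k = true
        · rw [if_pos hγ]
          refine Finset.sum_congr rfl fun n _ => ?_
          rw [hg n k, if_pos hγ]
          by_cases hd : k ∈ (v n).dom <;> simp [hd]
        · rw [if_neg hγ]
          refine Finset.sum_congr rfl fun n _ => ?_
          rw [hg n k, if_neg hγ]

/-- If `(γ̂, x̂)` minimizes `U^(r)` over `{0,1}^K × X^K`, then the trajectory with
domain `D_{γ̂}` and states `x̂` is an `r`-th order Fréchet mean of `v^(1),…,v^(N)`. -/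
theorem transformed_problem_gives_frechet_mean {K N : ℕ} {X : Type*} [MetricSpace X]
    (hK : 1 ≤ K) (hN : 1 ≤ N) {c r : ℝ} (hc : 0 < c) (hr : 1 ≤ r)
    (v : Fin N → Traj K X) (γhat : Fin K → Bool) (xhat : Fin K → X)
    (hmin : ∀ (γ : Fin K → Bool) (x : Fin K → X),
      Ucost c r v γhat xhat ≤ Ucost c r v γ x) :
    ∀ u : Traj K X,
      frechetCost c r v ⟨Dgam γhat, xhat⟩ ≤ frechetCost c r v u := by
  intro u
  set γu : Fin K → Bool := fun k => decide (k ∈ u.dom) with hγu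
  have hDu : Dgam γu = u.dom := by
    ext k; simp [Dgam, hγu]
  have hueq : u = ⟨Dgam γu, u.toFun⟩ := by
    cases u with
    | mk d f => simp_all
  rw [frechetCost_eq_Ucost hc hr, hueq, frechetCost_eq_Ucost hc hr]
  exact hmin γu u.toFun
end

section
/- Call a pair (η, ω) with η ∈ {0,1}^L and ω = (ω^(1),…,ω^(N)) ∈ (S_L)^N valid if ω^(n) ∈ Ω^(n)(η) for every n = 1,…,N. Define an elementary move from a valid state (η, ω) to a valid state (η', ω') to be either (i) η' differs from η in exactly one coordinate and ω' = ω, or (ii) η' = η and ω' differs from ω only in one component ω'^(n) ∈ Ω^(n)(η). Then any valid state can be transformed into any other valid state by a finite sequence of elementary moves passing only through valid states (the reflexive-transitive closure of the elementary-move relation relates any two valid states). -/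
/-- `‖η‖₁`: the number of ones in an existence list `η ∈ {0,1}^L`. -/
def normOne {L : ℕ} (η : Fin L → Bool) : ℕ :=
  (Finset.univ.filter (fun ℓ => η ℓ = true)).card

/-- `π` is an existence assignment between `η` and `ξ`. -/
def IsExistenceAssignment {L : ℕ} (ξ : Fin L → Bool) (η : Fin L → Bool)
    (π : Equiv.Perm (Fin L)) : Prop :=
  if normOne η ≤ normOne ξ then ∀ ℓ, η ℓ = true → ξ (π ℓ) = true
  else ∀ ℓ, ξ (π ℓ) = true → η ℓ = true

/-- A state `(η, ω)` is valid if `ω^(n) ∈ Ω^(n)(η)` for every `n`. -/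
def ValidState {L N : ℕ} (ξ : Fin N → Fin L → Bool)
    (s : (Fin L → Bool) × (Fin N → Equiv.Perm (Fin L))) : Prop :=
  ∀ n, IsExistenceAssignment (ξ n) s.1 (s.2 n)

/-- Elementary move between valid states: either (i) flip exactly one coordinate of the
existence list keeping the assignments, or (ii) keep the existence list and change the
assignment in at most one component. -/
def ElementaryMove {L N : ℕ} (ξ : Fin N → Fin L → Bool)
    (s s' : (Fin L → Bool) × (Fin N → Equiv.Perm (Fin L))) : Prop :=
  ValidState ξ s ∧ ValidState ξ s' ∧
    ((∃ ℓ₀ : Fin L, s'.1 ℓ₀ ≠ s.1 ℓ₀ ∧ (∀ ℓ, ℓ ≠ ℓ₀ → s'.1 ℓ = s.1 ℓ) ∧ s'.2 = s.2) ∨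
      (s'.1 = s.1 ∧ ∃ n₀ : Fin N, ∀ n, n ≠ n₀ → s'.2 n = s.2 n))

/-!
Every valid state is connected to `(⊥, 1)`, since every permutation is an assignment for the
empty list `⊥`. A permutation `π` is an assignment between `η` and `ξ` exactly when `η` and
`ξ ∘ π` are comparable. So if `η ℓ₀ = 1` and `η'` is `η` with coordinate `ℓ₀` switched off, for
each `n` some `π` is an assignment for both `η` and `η'`: put `ξ ∘ π` above `η` or below `η'`,
whichever the counts allow. Moving the components of `ω` to these `π` one at a time, then
flipping `ℓ₀`, strictly lowers `η`; conclude by well-founded induction and symmetry of moves.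
-/

open Function Relation Finset

theorem Finset.exists_perm_mapsTo {α : Type*} [Fintype α] [DecidableEq α] {s t : Finset α}
    (h : #s ≤ #t) : ∃ π : Equiv.Perm α, ∀ a ∈ s, π a ∈ t := by
  obtain ⟨u, hut, hu⟩ := exists_subset_card_eq h
  let e : s ≃ u := equivOfCardEq hu.symm
  exact ⟨e.extendSubtype, fun a ha => hut (e.extendSubtype_mem a ha)⟩

section ExistenceLists

variable {L : ℕ}

theorem le_iff_forall_eq_true {η η' : Fin L → Bool} : η ≤ η' ↔ ∀ ℓ, η ℓ = true → η' ℓ = true := by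
  simp only [Pi.le_def, Bool.le_iff_imp]

theorem normOne_strictMono : StrictMono (normOne (L := L)) := by
  intro η η' h
  obtain ⟨hle, ℓ, hℓ⟩ := Pi.lt_def.1 h
  rw [Bool.lt_iff] at hℓ
  refine card_lt_card ((ssubset_iff_of_subset fun ℓ => ?_).2 ⟨ℓ, ?_, ?_⟩)
  · simpa using le_iff_forall_eq_true.1 hle ℓ
  · simp [hℓ.2]
  · simp [hℓ.1]

theorem normOne_comp_perm (ξ : Fin L → Bool) (π : Equiv.Perm (Fin L)) :
    normOne (ξ ∘ π) = normOne ξ :=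
  card_equiv π (by simp)

theorem normOne_update_false_add_one {η : Fin L → Bool} {ℓ₀ : Fin L} (h : η ℓ₀ = true) :
    normOne (update η ℓ₀ false) + 1 = normOne η := by
  have : univ.filter (fun ℓ => update η ℓ₀ false ℓ = true) =
      (univ.filter (η · = true)).erase ℓ₀ := by
    ext ℓ
    by_cases hℓ : ℓ = ℓ₀ <;> simp [update_apply, hℓ]
  rw [normOne, normOne, this, card_erase_add_one (by simpa using h)]

theorem exists_perm_le_comp {η ξ : Fin L → Bool} (h : normOne η ≤ normOne ξ) :
    ∃ π : Equiv.Perm (Fin L), η ≤ ξ ∘ π := by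
  obtain ⟨π, hπ⟩ := exists_perm_mapsTo h
  exact ⟨π, le_iff_forall_eq_true.2 fun ℓ hℓ => by simpa using hπ ℓ (by simpa using hℓ)⟩

theorem exists_perm_comp_le {η ξ : Fin L → Bool} (h : normOne ξ ≤ normOne η) :
    ∃ π : Equiv.Perm (Fin L), ξ ∘ π ≤ η := by
  obtain ⟨σ, hσ⟩ := exists_perm_le_comp h
  exact ⟨σ.symm, fun ℓ => by simpa using hσ (σ.symm ℓ)⟩

theorem isExistenceAssignment_iff {ξ η : Fin L → Bool} {π : Equiv.Perm (Fin L)} :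
    IsExistenceAssignment ξ η π ↔ η ≤ ξ ∘ π ∨ ξ ∘ π ≤ η := by
  rw [IsExistenceAssignment, ← normOne_comp_perm ξ π]
  split_ifs with h
  · refine ⟨fun h' => Or.inl (le_iff_forall_eq_true.2 h'), fun h' => le_iff_forall_eq_true.1 ?_⟩
    rcases h' with h' | h'
    · exact h'
    · exact (h'.eq_of_not_lt fun hlt => (normOne_strictMono hlt).not_ge h).ge
  · refine ⟨fun h' => Or.inr (le_iff_forall_eq_true.2 h'), fun h' => le_iff_forall_eq_true.1 ?_⟩
    rcases h' with h' | h'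
    · exact absurd (normOne_strictMono.monotone h') h
    · exact h'

theorem isExistenceAssignment_bot (ξ : Fin L → Bool) (π : Equiv.Perm (Fin L)) :
    IsExistenceAssignment ξ ⊥ π :=
  isExistenceAssignment_iff.2 (Or.inl bot_le)

theorem exists_isExistenceAssignment_of_le {ξ η η' : Fin L → Bool} (hle : η' ≤ η)
    (hcard : normOne η ≤ normOne η' + 1) :
    ∃ π, IsExistenceAssignment ξ η π ∧ IsExistenceAssignment ξ η' π := by
  simp only [isExistenceAssignment_iff]
  rcases le_or_gt (normOne η) (normOne ξ) with h | h
  · obtain ⟨π, hπ⟩ := exists_perm_le_comp h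
    exact ⟨π, Or.inl hπ, Or.inl (hle.trans hπ)⟩
  · obtain ⟨π, hπ⟩ := exists_perm_comp_le (show normOne ξ ≤ normOne η' by omega)
    exact ⟨π, Or.inr (hπ.trans hle), Or.inr hπ⟩

end ExistenceLists

theorem Relation.reflTransGen_of_forall_update {ι α : Type*} [Fintype ι] [DecidableEq ι]
    {r : (ι → α) → (ι → α) → Prop} {p : ι → α → Prop}
    (hr : ∀ f i a, (∀ j, p j (f j)) → p i a → r f (update f i a))
    {f g : ι → α} (hf : ∀ i, p i (f i)) (hg : ∀ i, p i (g i)) : ReflTransGen r f g := by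
  suffices ∀ s : Finset ι, ReflTransGen r f (s.piecewise g f) by
    simpa using this univ
  intro s
  induction s using Finset.induction_on with
  | empty => simpa using ReflTransGen.refl
  | insert i s _ ih =>
    rw [piecewise_insert]
    exact ih.tail (hr _ i _ (fun j => piecewise_cases s g f (p j) (hg j) (hf j)) (hg i))

namespace ElementaryMove

variable {L N : ℕ} (ξ : Fin N → Fin L → Bool)

instance : Std.Symm (ElementaryMove ξ) where
  symm _ _ := fun ⟨hs, hs', hmove⟩ => ⟨hs', hs, hmove.imp
    (fun ⟨ℓ₀, hne, hoth, heq⟩ => ⟨ℓ₀, hne.symm, fun ℓ hℓ => (hoth ℓ hℓ).symm, heq.symm⟩)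
    (fun ⟨heq, n₀, hoth⟩ => ⟨heq.symm, n₀, fun n hn => (hoth n hn).symm⟩)⟩

variable {ξ}

theorem reflTransGen_of_fst_eq {η : Fin L → Bool} {ω ω' : Fin N → Equiv.Perm (Fin L)}
    (hs : ValidState ξ (η, ω)) (hs' : ValidState ξ (η, ω')) :
    ReflTransGen (ElementaryMove ξ) (η, ω) (η, ω') := by
  refine ReflTransGen.lift (Prod.mk η) (fun _ _ h => h) _ _
    (reflTransGen_of_forall_update (p := fun n => IsExistenceAssignment (ξ n) η) ?_ hs hs')
  intro ω n π hω hπ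
  exact ⟨hω, (forall_update_iff ω _).2 ⟨hπ, fun m _ => hω m⟩,
    Or.inr ⟨rfl, n, fun m hm => update_of_ne hm _ _⟩⟩

theorem reflTransGen_bot (s : (Fin L → Bool) × (Fin N → Equiv.Perm (Fin L)))
    (hs : ValidState ξ s) : ReflTransGen (ElementaryMove ξ) s (⊥, 1) := by
  obtain ⟨η, ω⟩ := s
  induction η using WellFoundedLT.induction generalizing ω with
  | _ η ih =>
  obtain rfl | ⟨ℓ₀, hℓ₀⟩ : η = ⊥ ∨ ∃ ℓ₀, η ℓ₀ = true := by
    simp [funext_iff, or_iff_not_imp_left]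
  · exact reflTransGen_of_fst_eq hs fun n => isExistenceAssignment_bot (ξ n) 1
  set η' := update η ℓ₀ false
  have hlt : η' < η := update_lt_self_iff.2 (by simp [hℓ₀])
  choose π hπ hπ' using fun n => exists_isExistenceAssignment_of_le (ξ := ξ n) hlt.le
    (normOne_update_false_add_one hℓ₀).ge
  have hflip : ElementaryMove ξ (η, π) (η', π) :=
    ⟨hπ, hπ', Or.inl ⟨ℓ₀, by simp [η', hℓ₀], fun ℓ hℓ => update_of_ne hℓ _ _, rfl⟩⟩
  exact (reflTransGen_of_fst_eq hs hπ).trans (ReflTransGen.head hflip (ih η' hlt π hπ'))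

end ElementaryMove

theorem gibbs_state_space_irreducible_general {L N : ℕ}
    (ξ : Fin N → Fin L → Bool)
    (s s' : (Fin L → Bool) × (Fin N → Equiv.Perm (Fin L)))
    (hs : ValidState ξ s) (hs' : ValidState ξ s') :
    Relation.ReflTransGen (ElementaryMove ξ) s s' :=
  (ElementaryMove.reflTransGen_bot s hs).trans
    (Std.Symm.symm _ _ (ElementaryMove.reflTransGen_bot s' hs'))

/-- Irreducibility of the Gibbs sampler state space: any valid state can be transformed
into any other valid state by a finite sequence of elementary moves passing only
through valid states. -/
theorem gibbs_state_space_irreducible {L N : ℕ} (hL : 1 ≤ L) (hN : 1 ≤ N)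
    (ξ : Fin N → Fin L → Bool)
    (s s' : (Fin L → Bool) × (Fin N → Equiv.Perm (Fin L)))
    (hs : ValidState ξ s) (hs' : ValidState ξ s') :
    Relation.ReflTransGen (ElementaryMove ξ) s s' :=
  gibbs_state_space_irreducible_general ξ s s' hs hs'
end
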